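/- Let Y be a finite nonempty set, let π_inst be a strictly positive probability mass function on Y, let r : Y → ℝ, and let β > 0. Define for each t ≥ 0 the distribution π_t(y) = π_inst(y) exp(((1 − e^{−βt})/β) r(y)) / Z_t, where Z_t = ∑_{y'} π_inst(y') exp(((1 − e^{−βt})/β) r(y')). Then π_0 = π_inst, and for every y ∈ Y and t ≥ 0, the map t ↦ log π_t(y) is differentiable with derivative equal to r(y) − β(log π_t(y) − log π_inst(y)) − β − λ_t, where λ_t = ∑_y π_t(y)[ r(y) − β(log π_t(y) − log π_inst(y)) − β ]; that is, π_t solves the natural-gradient replicator flow of the KL-regularized objective started at π_inst. -/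

import Mathlib

/-!
The family is an exponential tilt `π_inst · exp (s r) / Z(s)` of the reference measure whose
inverse temperature runs along the schedule `s(t) = (1 - e^{-βt}) / β`. Along any tilt,
`d/ds log π_s(y) = r(y) - E_{π_s}[r]`, while the replicator field evaluated at `π_s` is
`(1 - βs) r(y) + β log Z(s) - β`; subtracting its `π_s`-mean `λ` leaves `(1 - βs) (r(y) - E_{π_s}[r])`.
So the tilt solves the flow exactly when `s' = 1 - βs`, the linear ODE solved by the schedule.
-/

open Real Finset

namespace ExpTilt

variable {Y : Type*} [Fintype Y] (w r : Y → ℝ)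

noncomputable def partition (s : ℝ) : ℝ := ∑ y, w y * exp (s * r y)

noncomputable def tilt (s : ℝ) (y : Y) : ℝ := w y * exp (s * r y) / partition w r s

variable {w}

theorem partition_pos [Nonempty Y] (hw : ∀ y, 0 < w y) (s : ℝ) : 0 < partition w r s :=
  sum_pos (fun y _ => mul_pos (hw y) (exp_pos _)) univ_nonempty

theorem tilt_zero (hsum : ∑ y, w y = 1) : tilt w r 0 = w := by
  funext y
  simp [tilt, partition, hsum]

theorem sum_tilt [Nonempty Y] (hw : ∀ y, 0 < w y) (s : ℝ) : ∑ y, tilt w r s y = 1 := by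
  simp only [tilt]
  rw [← sum_div]
  exact div_self (partition_pos r hw s).ne'

theorem log_tilt [Nonempty Y] (hw : ∀ y, 0 < w y) (s : ℝ) (y : Y) :
    log (tilt w r s y) = log (w y) + s * r y - log (partition w r s) := by
  rw [tilt, log_div (mul_pos (hw y) (exp_pos _)).ne' (partition_pos r hw s).ne',
    log_mul (hw y).ne' (exp_ne_zero _), log_exp]

theorem hasDerivAt_partition (s : ℝ) :
    HasDerivAt (partition w r) (∑ y, w y * (exp (s * r y) * r y)) s :=
  HasDerivAt.fun_sum fun y _ => ((hasDerivAt_mul_const (r y)).exp.const_mul (w y))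

theorem hasDerivAt_log_partition [Nonempty Y] (hw : ∀ y, 0 < w y) (s : ℝ) :
    HasDerivAt (fun s => log (partition w r s)) (∑ y, tilt w r s y * r y) s := by
  refine ((hasDerivAt_partition r s).log (partition_pos r hw s).ne').congr_deriv ?_
  simp only [tilt, sum_div, div_mul_eq_mul_div, mul_assoc]

theorem hasDerivAt_log_tilt [Nonempty Y] (hw : ∀ y, 0 < w y) (s : ℝ) (y : Y) :
    HasDerivAt (fun s => log (tilt w r s y)) (r y - ∑ y', tilt w r s y' * r y') s := by
  simp only [log_tilt r hw]
  exact ((hasDerivAt_mul_const (r y)).const_add (log (w y))).fun_sub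
    (hasDerivAt_log_partition r hw s)

theorem replicatorField_tilt [Nonempty Y] (hw : ∀ y, 0 < w y) (β s : ℝ) (y : Y) :
    r y - β * (log (tilt w r s y) - log (w y)) - β =
      (1 - β * s) * r y + (β * log (partition w r s) - β) := by
  rw [log_tilt r hw]
  ring

theorem sum_tilt_mul_replicatorField [Nonempty Y] (hw : ∀ y, 0 < w y) (β s : ℝ) :
    ∑ y, tilt w r s y * (r y - β * (log (tilt w r s y) - log (w y)) - β) =
      (1 - β * s) * ∑ y, tilt w r s y * r y + (β * log (partition w r s) - β) := by
  simp only [replicatorField_tilt r hw, mul_add, sum_add_distrib, ← sum_mul, sum_tilt r hw,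
    one_mul, mul_sum]
  congr 1
  exact sum_congr rfl fun y _ => by ring

end ExpTilt

noncomputable def klSchedule (β t : ℝ) : ℝ := (1 - exp (-(β * t))) / β

theorem hasDerivAt_klSchedule {β : ℝ} (hβ : β ≠ 0) (t : ℝ) :
    HasDerivAt (klSchedule β) (1 - β * klSchedule β t) t := by
  have h := ((hasDerivAt_id t).const_mul β).fun_neg.exp.const_sub 1 |>.div_const β
  refine h.congr_deriv ?_
  simp only [klSchedule, id, mul_one]
  field_simp
  ring

open ExpTilt in
/-- Closed-form solution of the natural-gradient replicator flow: The
family `p t y = πinst y * exp (((1 - exp (-(β * t))) / β) * r y) / Z t` satisfies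
`p 0 = πinst`, and for every `y` and `t ≥ 0` the map `t ↦ log (p t y)` is differentiable
with derivative `r y - β * (log (p t y) - log (πinst y)) - β - λ t`, where
`λ t = ∑ y, p t y * (r y - β * (log (p t y) - log (πinst y)) - β)` is the Lagrange
multiplier enforcing normalization; that is, `p` solves the natural-gradient replicator
flow of the KL-regularized objective started at `πinst`. -/
theorem stmt15 {Y : Type*} [Fintype Y] [Nonempty Y]
    (πinst : Y → ℝ) (hpos : ∀ y, 0 < πinst y) (hsum : ∑ y, πinst y = 1)
    (r : Y → ℝ) (β : ℝ) (hβ : 0 < β)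
    (Z : ℝ → ℝ)
    (hZ : ∀ t, Z t = ∑ y', πinst y' * Real.exp ((1 - Real.exp (-(β * t))) / β * r y'))
    (p : ℝ → Y → ℝ)
    (hp : ∀ t y, p t y = πinst y * Real.exp ((1 - Real.exp (-(β * t))) / β * r y) / Z t)
    (lam : ℝ → ℝ)
    (hlam : ∀ t, lam t =
      ∑ y, p t y * (r y - β * (Real.log (p t y) - Real.log (πinst y)) - β)) :
    (∀ y, p 0 y = πinst y) ∧
    ∀ (y : Y) (t : ℝ), 0 ≤ t →
      HasDerivAt (fun t' => Real.log (p t' y))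
        (r y - β * (Real.log (p t y) - Real.log (πinst y)) - β - lam t) t := by
  obtain rfl : p = fun t => tilt πinst r (klSchedule β t) := by
    funext t y
    rw [hp, hZ]
    rfl
  refine ⟨fun y => by simp [klSchedule, tilt_zero r hsum], fun y t _ => ?_⟩
  refine ((hasDerivAt_log_tilt r hpos _ y).comp t (hasDerivAt_klSchedule hβ.ne' t)).congr_deriv ?_
  rw [hlam, sum_tilt_mul_replicatorField r hpos, replicatorField_tilt r hpos]
  ring
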